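/- arXiv:1708.06113 — 8 statements merged into one kernel-verified Lean document; each statement's English description precedes it below -/
import Mathlib

section
/- Suppose (v1, v2, w1, w2) : ℝ → ℝ are differentiable functions satisfying w1' = 2(v1+v2+x/2) - w1², v1' = 2 v1 w1, w2' = 2(v1+v2+(x-s)/2) - w2², v2' = 2 v2 w2 + 2α, and v2(x) ≠ 0 for all x. Then v2 satisfies v2'' - ((v2')² - 4α²)/(2 v2) - 4 v2 (v1 + v2 + (x-s)/2) = 0. -/
/-- If `(v1, v2, w1, w2)` solve the coupled Painlevé II Hamiltonian system and `v2` never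
vanishes, then `v2` satisfies `v2'' - (v2'^2 - 4α²)/(2 v2) - 4 v2 (v1 + v2 + (x-s)/2) = 0`. -/
theorem coupledP2_v2_equation (s α : ℝ) (v1 v2 w1 w2 : ℝ → ℝ)
    (hv1 : Differentiable ℝ v1) (hv2 : Differentiable ℝ v2)
    (hw1 : Differentiable ℝ w1) (hw2 : Differentiable ℝ w2)
    (heq1 : ∀ x, deriv w1 x = 2 * (v1 x + v2 x + x / 2) - (w1 x) ^ 2)
    (heq2 : ∀ x, deriv v1 x = 2 * v1 x * w1 x)
    (heq3 : ∀ x, deriv w2 x = 2 * (v1 x + v2 x + (x - s) / 2) - (w2 x) ^ 2)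
    (heq4 : ∀ x, deriv v2 x = 2 * v2 x * w2 x + 2 * α)
    (hne : ∀ x, v2 x ≠ 0) :
    ∀ x, deriv (deriv v2) x - ((deriv v2 x) ^ 2 - 4 * α ^ 2) / (2 * v2 x)
      - 4 * v2 x * (v1 x + v2 x + (x - s) / 2) = 0 := by
  intro x
  have hd : deriv v2 = fun x => 2 * v2 x * w2 x + 2 * α := funext heq4
  have h : HasDerivAt (fun x => 2 * v2 x * w2 x + 2 * α)
      (2 * (deriv v2 x * w2 x + v2 x * deriv w2 x)) x := by
    have := (((hv2 x).hasDerivAt.mul (hw2 x).hasDerivAt).const_mul 2).add_const (2 * α)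
    refine this.congr_of_eventuallyEq (Filter.Eventually.of_forall fun y => ?_)
    simp only [Pi.mul_apply]
    ring
  rw [hd, h.deriv, heq3, heq4]
  field_simp [hne x]
  ring
end

section
/- Suppose (v1, v2, w1, w2) : ℝ → ℝ are twice differentiable and satisfy w1' = 2(v1+v2+x/2) - w1², v1' = 2 v1 w1, w2' = 2(v1+v2+(x-s)/2) - w2², v2' = 2 v2 w2 + 2α. Then w1'' - 2 w1³ + 2x w1 + 4 v2 (w1 - w2) - (4α+1) = 0 and w2'' - 2 w2³ + 2(x-s) w2 - 4 v1 (w1 - w2) - (4α+1) = 0. -/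
/-- If `(v1, v2, w1, w2)` solve the coupled Painlevé II Hamiltonian system, then `w1` and
`w2` satisfy the coupled second-order equations
`w1'' - 2 w1³ + 2x w1 + 4 v2 (w1 - w2) - (4α+1) = 0` and
`w2'' - 2 w2³ + 2(x-s) w2 - 4 v1 (w1 - w2) - (4α+1) = 0`. -/
theorem coupledP2_w_equations (s α : ℝ) (v1 v2 w1 w2 : ℝ → ℝ)
    (hv1 : Differentiable ℝ v1) (hv2 : Differentiable ℝ v2)
    (hw1 : Differentiable ℝ w1) (hw2 : Differentiable ℝ w2)
    (hw1' : Differentiable ℝ (deriv w1)) (hw2' : Differentiable ℝ (deriv w2))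
    (heq1 : ∀ x, deriv w1 x = 2 * (v1 x + v2 x + x / 2) - (w1 x) ^ 2)
    (heq2 : ∀ x, deriv v1 x = 2 * v1 x * w1 x)
    (heq3 : ∀ x, deriv w2 x = 2 * (v1 x + v2 x + (x - s) / 2) - (w2 x) ^ 2)
    (heq4 : ∀ x, deriv v2 x = 2 * v2 x * w2 x + 2 * α) :
    (∀ x, deriv (deriv w1) x - 2 * (w1 x) ^ 3 + 2 * x * w1 x
        + 4 * v2 x * (w1 x - w2 x) - (4 * α + 1) = 0) ∧
    (∀ x, deriv (deriv w2) x - 2 * (w2 x) ^ 3 + 2 * (x - s) * w2 x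
        - 4 * v1 x * (w1 x - w2 x) - (4 * α + 1) = 0) := by
  have key1 : ∀ x, deriv (deriv w1) x
      = 2 * (deriv v1 x + deriv v2 x + 1 / 2) - 2 * w1 x * deriv w1 x := by
    intro x
    have h : deriv w1 = fun x => 2 * (v1 x + v2 x + x / 2) - (w1 x) ^ 2 := funext heq1
    conv_lhs => rw [h]
    have H : HasDerivAt (fun x => 2 * (v1 x + v2 x + x / 2) - (w1 x) ^ 2)
        (2 * (deriv v1 x + deriv v2 x + 1 / 2) - 2 * w1 x * deriv w1 x) x := by
      have : HasDerivAt (fun x => 2 * (v1 x + v2 x + x / 2) - (w1 x) ^ 2) _ x :=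
        ((((hv1 x).hasDerivAt.add (hv2 x).hasDerivAt).add
        ((hasDerivAt_id x).div_const 2)).const_mul 2).sub ((hw1 x).hasDerivAt.pow 2)
      convert this using 1
      push_cast
      ring
    exact H.deriv
  have key2 : ∀ x, deriv (deriv w2) x
      = 2 * (deriv v1 x + deriv v2 x + 1 / 2) - 2 * w2 x * deriv w2 x := by
    intro x
    have h : deriv w2 = fun x => 2 * (v1 x + v2 x + (x - s) / 2) - (w2 x) ^ 2 := funext heq3
    conv_lhs => rw [h]
    have H : HasDerivAt (fun x => 2 * (v1 x + v2 x + (x - s) / 2) - (w2 x) ^ 2)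
        (2 * (deriv v1 x + deriv v2 x + 1 / 2) - 2 * w2 x * deriv w2 x) x := by
      have : HasDerivAt (fun x => 2 * (v1 x + v2 x + (x - s) / 2) - (w2 x) ^ 2) _ x :=
        ((((hv1 x).hasDerivAt.add (hv2 x).hasDerivAt).add
        (((hasDerivAt_id x).sub_const s).div_const 2)).const_mul 2).sub
        ((hw2 x).hasDerivAt.pow 2)
      convert this using 1
      push_cast
      ring
    exact H.deriv
  constructor
  · intro x
    rw [key1 x, heq1, heq2, heq4]
    ring
  · intro x
    rw [key2 x, heq3, heq2, heq4]
    ring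
end

section
/- Suppose (v1, v2, w1, w2) : ℝ → ℝ satisfy the coupled Painlevé II Hamiltonian system (with real parameters α, s), and let H(x) be the Hamiltonian evaluated along the solution. Then H = (1/3) d/dx (v1 w1 + v2 w2 + 2 x H) + 2α w2 + (2/3) s v2 - (v1 w1' + v2 w2' + H) holds identically in x. -/
/-- Along solutions of the coupled Painlevé II Hamiltonian system, the Hamiltonian satisfies
`H = (1/3) d/dx (v1 w1 + v2 w2 + 2 x H) + 2α w2 + (2/3) s v2 - (v1 w1' + v2 w2' + H)`. -/
theorem coupledP2_Hamiltonian_identity (s α : ℝ) (v1 v2 w1 w2 : ℝ → ℝ)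
    (hv1 : Differentiable ℝ v1) (hv2 : Differentiable ℝ v2)
    (hw1 : Differentiable ℝ w1) (hw2 : Differentiable ℝ w2)
    (heq1 : ∀ x, deriv w1 x = 2 * (v1 x + v2 x + x / 2) - (w1 x) ^ 2)
    (heq2 : ∀ x, deriv v1 x = 2 * v1 x * w1 x)
    (heq3 : ∀ x, deriv w2 x = 2 * (v1 x + v2 x + (x - s) / 2) - (w2 x) ^ 2)
    (heq4 : ∀ x, deriv v2 x = 2 * v2 x * w2 x + 2 * α)
    (H : ℝ → ℝ)
    (hH : ∀ x, H x = -(v1 x + v2 x) ^ 2 - (v1 x + v2 x) * x + v1 x * (w1 x) ^ 2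
        + v2 x * (w2 x) ^ 2 + s * v2 x + 2 * α * w2 x) :
    ∀ x, H x = (1 / 3) * deriv (fun t => v1 t * w1 t + v2 t * w2 t + 2 * t * H t) x
        + 2 * α * w2 x + (2 / 3) * s * v2 x
        - (v1 x * deriv w1 x + v2 x * deriv w2 x + H x) := by
  intro x
  have hHfun : H = fun t => -(v1 t + v2 t) ^ 2 - (v1 t + v2 t) * t + v1 t * (w1 t) ^ 2
      + v2 t * (w2 t) ^ 2 + s * v2 t + 2 * α * w2 t := funext hH
  have Hv1 : HasDerivAt v1 (deriv v1 x) x := (hv1 x).hasDerivAt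
  have Hv2 : HasDerivAt v2 (deriv v2 x) x := (hv2 x).hasDerivAt
  have Hw1 : HasDerivAt w1 (deriv w1 x) x := (hw1 x).hasDerivAt
  have Hw2 : HasDerivAt w2 (deriv w2 x) x := (hw2 x).hasDerivAt
  have HH : HasDerivAt H
      (-((2 : ℕ) * (v1 x + v2 x) ^ 1 * (deriv v1 x + deriv v2 x))
        - ((deriv v1 x + deriv v2 x) * x + (v1 x + v2 x) * 1)
        + (deriv v1 x * (w1 x) ^ 2 + v1 x * ((2 : ℕ) * (w1 x) ^ 1 * deriv w1 x))
        + (deriv v2 x * (w2 x) ^ 2 + v2 x * ((2 : ℕ) * (w2 x) ^ 1 * deriv w2 x))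
        + s * deriv v2 x + 2 * α * deriv w2 x) x := by
    rw [hHfun]
    exact ((((((((Hv1.add Hv2).pow 2).neg.sub
      ((Hv1.add Hv2).mul (hasDerivAt_id x))).add
      (Hv1.mul (Hw1.pow 2))).add
      (Hv2.mul (Hw2.pow 2))).add
      (Hv2.const_mul s)).add (Hw2.const_mul (2 * α))))
  have hid : HasDerivAt (fun t : ℝ => 2 * t) 2 x := by
    simpa using (hasDerivAt_id x).const_mul (2 : ℝ)
  have HF := ((Hv1.mul Hw1).add (Hv2.mul Hw2)).add (hid.mul HH)
  rw [show (fun t => v1 t * w1 t + v2 t * w2 t + 2 * t * H t) = v1 * w1 + v2 * w2 + (fun t : ℝ => 2 * t) * H from rfl, HF.deriv]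
  simp only [heq1, heq2, heq3, heq4, hH]
  ring
end

section
/- Suppose (v1, v2, w1, w2) : ℝ × ℝ → ℝ are smooth functions of (x, α) such that for each fixed α they satisfy the coupled Painlevé II Hamiltonian system w1_x = 2(v1+v2+x/2) - w1², v1_x = 2 v1 w1, w2_x = 2(v1+v2+(x-s)/2) - w2², v2_x = 2 v2 w2 + 2α, and let H(x,α) be the Hamiltonian evaluated along the solution. Then ∂/∂α (v1 w1_x + v2 w2_x + H) = ∂/∂x (v1 ∂w1/∂α + v2 ∂w2/∂α) + 2 w2. -/
open Function

private lemma hasDerivAt_sl1 (g : ℝ × ℝ → ℝ) (hg : Differentiable ℝ g) (x α : ℝ) :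
    HasDerivAt (fun t => g (t, α)) (fderiv ℝ g (x, α) (1, 0)) x := by
  have h1 : HasDerivAt (fun t : ℝ => (t, α)) ((1 : ℝ), (0 : ℝ)) x :=
    (hasDerivAt_id x).prodMk (hasDerivAt_const x α)
  exact (hg (x, α)).hasFDerivAt.comp_hasDerivAt x h1

private lemma hasDerivAt_sl2 (g : ℝ × ℝ → ℝ) (hg : Differentiable ℝ g) (x α : ℝ) :
    HasDerivAt (fun a => g (x, a)) (fderiv ℝ g (x, α) (0, 1)) α := by
  have h1 : HasDerivAt (fun a : ℝ => (x, a)) ((0 : ℝ), (1 : ℝ)) α :=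
    (hasDerivAt_const α x).prodMk (hasDerivAt_id α)
  exact (hg (x, α)).hasFDerivAt.comp_hasDerivAt α h1

private lemma diff_sl2 (f : ℝ → ℝ → ℝ) (hf : ContDiff ℝ (⊤ : ℕ∞) (Function.uncurry f)) (x : ℝ) :
    Differentiable ℝ (fun a => f x a) := fun α =>
  ((hasDerivAt_sl2 (Function.uncurry f) (hf.differentiable (by simp)) x α)).differentiableAt

private lemma diff_sl1 (f : ℝ → ℝ → ℝ) (hf : ContDiff ℝ (⊤ : ℕ∞) (Function.uncurry f)) (α : ℝ) :
    Differentiable ℝ (fun t => f t α) := fun x =>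
  ((hasDerivAt_sl1 (Function.uncurry f) (hf.differentiable (by simp)) x α)).differentiableAt

/-- Schwarz: the mixed partial derivative, as a `HasDerivAt` statement. -/
private lemma mixed_deriv (f : ℝ → ℝ → ℝ) (hf : ContDiff ℝ (⊤ : ℕ∞) (Function.uncurry f)) (x α : ℝ) :
    HasDerivAt (fun t => deriv (fun a => f t a) α)
      (deriv (fun a => deriv (fun t => f t a) x) α) x := by
  have hdf : ContDiff ℝ (⊤ : ℕ∞) (fderiv ℝ (Function.uncurry f)) := hf.fderiv_right (by simp)
  have hg2 : ContDiff ℝ (⊤ : ℕ∞) (fun p => fderiv ℝ (Function.uncurry f) p ((0 : ℝ), (1 : ℝ))) :=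
    hdf.clm_apply contDiff_const
  have hg1 : ContDiff ℝ (⊤ : ℕ∞) (fun p => fderiv ℝ (Function.uncurry f) p ((1 : ℝ), (0 : ℝ))) :=
    hdf.clm_apply contDiff_const
  have e1 : (fun t => deriv (fun a => f t a) α)
      = fun t => (fun p => fderiv ℝ (Function.uncurry f) p ((0 : ℝ), (1 : ℝ))) (t, α) := by
    funext t
    exact (hasDerivAt_sl2 (Function.uncurry f) (hf.differentiable (by simp)) t α).deriv
  have e2 : (fun a => deriv (fun t => f t a) x)
      = fun a => (fun p => fderiv ℝ (Function.uncurry f) p ((1 : ℝ), (0 : ℝ))) (x, a) := by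
    funext a
    exact (hasDerivAt_sl1 (Function.uncurry f) (hf.differentiable (by simp)) x a).deriv
  rw [e1, e2]
  rw [(hasDerivAt_sl2 _ (hg1.differentiable (by simp)) x α).deriv]
  have h2 := hasDerivAt_sl1 _ (hg2.differentiable (by simp)) x α
  convert h2 using 1
  have hc : DifferentiableAt ℝ (fderiv ℝ (Function.uncurry f)) (x, α) :=
    (hdf.differentiable (by simp)) _
  rw [fderiv_clm_apply hc (differentiableAt_const _), fderiv_clm_apply hc (differentiableAt_const _)]
  simp only [fderiv_const, fderiv_fun_const, Pi.zero_apply, ContinuousLinearMap.comp_zero, zero_add,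
    ContinuousLinearMap.add_apply, ContinuousLinearMap.flip_apply]
  exact ((hf.contDiffAt).isSymmSndFDerivAt (by rw [minSmoothness_of_isRCLikeNormedField]; exact WithTop.coe_le_coe.mpr (le_top : (2 : ℕ∞) ≤ ⊤))).eq _ _

/-- For a family of solutions `(v1, v2, w1, w2)(x, α)` of the coupled Painlevé II system
depending smoothly on the parameter `α`, with Hamiltonian `H(x,α)`, one has
`∂/∂α (v1 w1_x + v2 w2_x + H) = ∂/∂x (v1 ∂_α w1 + v2 ∂_α w2) + 2 w2`. -/
theorem coupledP2_alpha_differential_identity (s : ℝ) (v1 v2 w1 w2 H : ℝ → ℝ → ℝ)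
    (hv1 : ContDiff ℝ (⊤ : ℕ∞) (Function.uncurry v1)) (hv2 : ContDiff ℝ (⊤ : ℕ∞) (Function.uncurry v2))
    (hw1 : ContDiff ℝ (⊤ : ℕ∞) (Function.uncurry w1)) (hw2 : ContDiff ℝ (⊤ : ℕ∞) (Function.uncurry w2))
    (heq1 : ∀ x α, deriv (fun t => w1 t α) x
        = 2 * (v1 x α + v2 x α + x / 2) - (w1 x α) ^ 2)
    (heq2 : ∀ x α, deriv (fun t => v1 t α) x = 2 * v1 x α * w1 x α)
    (heq3 : ∀ x α, deriv (fun t => w2 t α) x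
        = 2 * (v1 x α + v2 x α + (x - s) / 2) - (w2 x α) ^ 2)
    (heq4 : ∀ x α, deriv (fun t => v2 t α) x = 2 * v2 x α * w2 x α + 2 * α)
    (hH : ∀ x α, H x α = -(v1 x α + v2 x α) ^ 2 - (v1 x α + v2 x α) * x
        + v1 x α * (w1 x α) ^ 2 + v2 x α * (w2 x α) ^ 2 + s * v2 x α + 2 * α * w2 x α) :
    ∀ x α, deriv (fun a => v1 x a * deriv (fun t => w1 t a) x
          + v2 x a * deriv (fun t => w2 t a) x + H x a) α
      = deriv (fun t => v1 t α * deriv (fun a => w1 t a) α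
          + v2 t α * deriv (fun a => w2 t a) α) x
        + 2 * w2 x α := by
  intro x α
  -- α-partials at (x, α)
  set A' := deriv (fun a => v1 x a) α with hA'
  set B' := deriv (fun a => v2 x a) α with hB'
  set C' := deriv (fun a => w1 x a) α with hC'
  set D' := deriv (fun a => w2 x a) α with hD'
  have hA : HasDerivAt (fun a => v1 x a) A' α := ((diff_sl2 v1 hv1 x) α).hasDerivAt
  have hB : HasDerivAt (fun a => v2 x a) B' α := ((diff_sl2 v2 hv2 x) α).hasDerivAt
  have hC : HasDerivAt (fun a => w1 x a) C' α := ((diff_sl2 w1 hw1 x) α).hasDerivAt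
  have hD : HasDerivAt (fun a => w2 x a) D' α := ((diff_sl2 w2 hw2 x) α).hasDerivAt
  -- LHS
  have hLfun : (fun a => v1 x a * deriv (fun t => w1 t a) x
        + v2 x a * deriv (fun t => w2 t a) x + H x a)
      = fun a => (v1 x a + v2 x a) ^ 2 + 2 * a * w2 x a := by
    funext a
    rw [heq1 x a, heq3 x a, hH x a]; ring
  have hL : HasDerivAt (fun a => (v1 x a + v2 x a) ^ 2 + 2 * a * w2 x a)
      (2 * (v1 x α + v2 x α) * (A' + B') + 2 * w2 x α + 2 * α * D') α := by
    have h := ((hA.fun_add hB).fun_pow 2).fun_add ((((hasDerivAt_id α).const_mul 2)).fun_mul hD)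
    refine h.congr_deriv ?_
    simp only [id_eq]
    push_cast [Nat.reduceSub]
    ring
  have hLHS : deriv (fun a => v1 x a * deriv (fun t => w1 t a) x
        + v2 x a * deriv (fun t => w2 t a) x + H x a) α
      = 2 * (v1 x α + v2 x α) * (A' + B') + 2 * w2 x α + 2 * α * D' := by
    rw [hLfun]; exact hL.deriv
  -- mixed partials via Schwarz
  have hmix1 : HasDerivAt (fun t => deriv (fun a => w1 t a) α)
      (2 * (A' + B') - 2 * w1 x α * C') x := by
    have h := mixed_deriv w1 hw1 x α
    have e : (fun a => deriv (fun t => w1 t a) x)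
        = fun a => 2 * (v1 x a + v2 x a + x / 2) - (w1 x a) ^ 2 := by
      funext a; exact heq1 x a
    have hval : deriv (fun a => deriv (fun t => w1 t a) x) α
        = 2 * (A' + B') - 2 * w1 x α * C' := by
      rw [e]
      have h2 : HasDerivAt (fun a => 2 * (v1 x a + v2 x a + x / 2) - (w1 x a) ^ 2)
          (2 * (A' + B') - 2 * w1 x α * C') α := by
        have h3 := (((hA.fun_add hB).fun_add (hasDerivAt_const α (x / 2))).const_mul 2).fun_sub (hC.fun_pow 2)
        refine h3.congr_deriv ?_
        push_cast [Nat.reduceSub]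
        ring
      exact h2.deriv
    rwa [hval] at h
  have hmix2 : HasDerivAt (fun t => deriv (fun a => w2 t a) α)
      (2 * (A' + B') - 2 * w2 x α * D') x := by
    have h := mixed_deriv w2 hw2 x α
    have e : (fun a => deriv (fun t => w2 t a) x)
        = fun a => 2 * (v1 x a + v2 x a + (x - s) / 2) - (w2 x a) ^ 2 := by
      funext a; exact heq3 x a
    have hval : deriv (fun a => deriv (fun t => w2 t a) x) α
        = 2 * (A' + B') - 2 * w2 x α * D' := by
      rw [e]
      have h2 : HasDerivAt (fun a => 2 * (v1 x a + v2 x a + (x - s) / 2) - (w2 x a) ^ 2)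
          (2 * (A' + B') - 2 * w2 x α * D') α := by
        have h3 := (((hA.fun_add hB).fun_add (hasDerivAt_const α ((x - s) / 2))).const_mul 2).fun_sub
          (hD.fun_pow 2)
        refine h3.congr_deriv ?_
        push_cast [Nat.reduceSub]
        ring
      exact h2.deriv
    rwa [hval] at h
  -- x-derivatives of v1, v2
  have hAx : HasDerivAt (fun t => v1 t α) (2 * v1 x α * w1 x α) x := by
    have := ((diff_sl1 v1 hv1 α) x).hasDerivAt
    rwa [heq2 x α] at this
  have hBx : HasDerivAt (fun t => v2 t α) (2 * v2 x α * w2 x α + 2 * α) x := by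
    have := ((diff_sl1 v2 hv2 α) x).hasDerivAt
    rwa [heq4 x α] at this
  -- RHS
  have hR : HasDerivAt (fun t => v1 t α * deriv (fun a => w1 t a) α
        + v2 t α * deriv (fun a => w2 t a) α)
      ((2 * v1 x α * w1 x α) * C' + v1 x α * (2 * (A' + B') - 2 * w1 x α * C')
        + ((2 * v2 x α * w2 x α + 2 * α) * D'
          + v2 x α * (2 * (A' + B') - 2 * w2 x α * D'))) x :=
    (hAx.mul hmix1).add (hBx.mul hmix2)
  rw [hLHS, hR.deriv]
  ring
end

section
/- Let α ∈ ℝ and let y : ℝ → ℝ solve the Painlevé II equation y''(t) = t y(t) + 2 y(t)³ - (2α + 1/2). Define w(t) := y'(t) + y(t)² + t/2 and assume w(t) ≠ 0 for all t. Then u(τ) := 2^{-1/3} w(-2^{1/3} τ) satisfies the Painlevé XXXIV equation u''(τ) = 4 u(τ)² + 2 τ u(τ) + (u'(τ)² - 4α²)/(2 u(τ)). -/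
/-- If `y` solves Painlevé II with parameter `2α + 1/2` and
`w := y' + y² + t/2` is nonvanishing, then `u(τ) := 2^{-1/3} w(-2^{1/3} τ)` solves the
Painlevé XXXIV equation with parameter `2α`. -/
theorem P2_to_P34 (α : ℝ) (y : ℝ → ℝ) (hy : ContDiff ℝ (⊤ : ℕ∞) y)
    (hP2 : ∀ t, deriv (deriv y) t = t * y t + 2 * (y t) ^ 3 - (2 * α + 1 / 2))
    (w : ℝ → ℝ) (hw : ∀ t, w t = deriv y t + (y t) ^ 2 + t / 2)
    (hne : ∀ t, w t ≠ 0)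
    (u : ℝ → ℝ)
    (hu : ∀ τ, u τ = (2 : ℝ) ^ (-(1 : ℝ) / 3) * w (-(2 : ℝ) ^ ((1 : ℝ) / 3) * τ)) :
    ∀ τ, deriv (deriv u) τ = 4 * (u τ) ^ 2 + 2 * τ * u τ
        + ((deriv u τ) ^ 2 - 4 * α ^ 2) / (2 * u τ) := by
  have hy1 : Differentiable ℝ y := hy.differentiable (by simp)
  have hy' : ContDiff ℝ ((⊤ : ℕ∞) : WithTop ℕ∞) y := hy.of_le (mod_cast le_top)
  have hdy1 : Differentiable ℝ (deriv y) :=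
    ((contDiff_infty_iff_deriv.mp hy').2).differentiable (by simp)
  set c : ℝ := (2:ℝ) ^ ((1:ℝ)/3) with hc
  have hcpos : 0 < c := Real.rpow_pos_of_pos (by norm_num) _
  have hc0 : c ≠ 0 := hcpos.ne'
  have hc3 : c ^ 3 = 2 := by
    rw [hc, ← Real.rpow_natCast ((2:ℝ) ^ ((1:ℝ)/3)) 3, ← Real.rpow_mul (by norm_num)]
    norm_num
  have hcinv : (2:ℝ) ^ (-(1:ℝ)/3) = c⁻¹ := by
    rw [hc, neg_div, Real.rpow_neg (by norm_num)]
  -- first derivative of w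
  have hW : ∀ s, HasDerivAt w (2 * y s * w s - 2 * α) s := by
    intro s
    have h1 : HasDerivAt y (deriv y s) s := (hy1 s).hasDerivAt
    have h2 : HasDerivAt (deriv y) (deriv (deriv y) s) s := (hdy1 s).hasDerivAt
    have h3 := (h2.add (h1.pow 2)).add ((hasDerivAt_id s).div_const 2)
    have hweq : w = fun s => deriv y s + (y s) ^ 2 + s / 2 := funext hw
    rw [hweq]
    refine h3.congr_deriv ?_
    simp only [hP2 s]
    push_cast
    ring
  have hdw : ∀ s, deriv w s = 2 * y s * w s - 2 * α := fun s => (hW s).deriv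
  have hdweq : deriv w = fun s => 2 * y s * w s - 2 * α := funext hdw
  -- second derivative of w
  have hW2 : ∀ s, HasDerivAt (deriv w)
      (2 * deriv y s * w s + 2 * y s * (2 * y s * w s - 2 * α)) s := by
    intro s
    have h1 : HasDerivAt y (deriv y s) s := (hy1 s).hasDerivAt
    have h3 := (((h1.const_mul 2).mul (hW s)).sub_const (2 * α))
    rw [hdweq]
    exact h3.congr_deriv (by ring)
  intro τ
  set t : ℝ := -c * τ with ht
  have harg : ∀ σ : ℝ, HasDerivAt (fun τ : ℝ => -c * τ) (-c) σ := by
    intro σ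
    simpa using (hasDerivAt_id σ).const_mul (-c)
  have hueq : u = fun τ => c⁻¹ * w (-c * τ) := by
    funext σ; rw [hu σ, hcinv]
  -- derivative of u
  have hU : ∀ σ : ℝ, HasDerivAt u (-(2 * y (-c * σ) * w (-c * σ) - 2 * α)) σ := by
    intro σ
    have h := (((hW (-c * σ)).comp σ (harg σ)).const_mul c⁻¹)
    rw [hueq]
    refine h.congr_deriv ?_
    field_simp
  have hdu : ∀ σ, deriv u σ = -(2 * y (-c * σ) * w (-c * σ) - 2 * α) :=
    fun σ => (hU σ).deriv
  have hdueq : deriv u = fun σ => -(deriv w (-c * σ)) := by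
    funext σ; rw [hdu σ, hdw]
  -- second derivative of u
  have hU2 : HasDerivAt (deriv u)
      (c * (2 * deriv y t * w t + 2 * y t * (2 * y t * w t - 2 * α))) τ := by
    rw [hdueq]
    have h := (((hW2 t).comp τ (harg τ))).neg
    refine h.congr_deriv ?_
    ring
  have hddu : deriv (deriv u) τ
      = c * (2 * deriv y t * w t + 2 * y t * (2 * y t * w t - 2 * α)) := hU2.deriv
  have hyp : deriv y t = w t - (y t) ^ 2 - t / 2 := by rw [hw t]; ring
  have hut : u τ = c⁻¹ * w t := by rw [hu τ, hcinv, ht]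
  have hwt : w t ≠ 0 := hne t
  rw [hddu, hyp, hut, hdu τ, ← ht]
  have htau : τ = -t / c := by rw [ht]; field_simp
  rw [htau]
  field_simp
  linear_combination (4 * w t ^ 2 - 2 * t * w t + 4 * c ^ 2 * (w t) ^ 3 + 2 * c ^ 3 * (w t) ^ 2 * τ - 2 * c * (w t) * τ - 4 * (w t) ^ 2 + 4 * (w t) ^ 3 - 2 * c ^ 3 * (w t) ^ 2 * τ + 2 * c * (w t) ^ 2 * τ - 4 * c ^ 2 * (w t) ^ 3) * hc3
end

section
/- Let ψ1, ψ2 : ℝ × ℝ → ℂ be differentiable in t, and suppose there is a function c(t) (independent of the first variable) such that ∂ψ1/∂t (x;t) = i ψ2(x;t) and ∂ψ2/∂t (x;t) = (-i x - i c(t)) ψ1(x;t) for all x, t. Then for all x ≠ y, ∂/∂t [ (ψ2(x;t) ψ1(y;t) - ψ1(x;t) ψ2(y;t)) / (2πi (x - y)) ] = -(1/(2π)) ψ1(x;t) ψ1(y;t). -/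
open Real

/-- If `(ψ1, ψ2)` solve the `t`-equation of the Painlevé XXXIV Lax pair, then the
integrable kernel `(ψ2(x)ψ1(y) - ψ1(x)ψ2(y))/(2πi(x-y))` satisfies
`∂_t K(x,y;t) = -(1/2π) ψ1(x;t) ψ1(y;t)`. -/
theorem kernel_t_derivative (ψ1 ψ2 : ℝ → ℝ → ℂ) (c : ℝ → ℂ)
    (hd1 : ∀ x, Differentiable ℝ (fun t => ψ1 x t))
    (hd2 : ∀ x, Differentiable ℝ (fun t => ψ2 x t))
    (heq1 : ∀ x t, deriv (fun τ => ψ1 x τ) t = Complex.I * ψ2 x t)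
    (heq2 : ∀ x t, deriv (fun τ => ψ2 x τ) t
        = (-Complex.I * (x : ℂ) - Complex.I * c t) * ψ1 x t) :
    ∀ x y t : ℝ, x ≠ y →
      deriv (fun τ => (ψ2 x τ * ψ1 y τ - ψ1 x τ * ψ2 y τ)
          / (2 * (π : ℂ) * Complex.I * ((x : ℂ) - (y : ℂ)))) t
        = -(1 / (2 * (π : ℂ))) * ψ1 x t * ψ1 y t := by
  intro x y t hxy
  have hnum : deriv (fun τ => ψ2 x τ * ψ1 y τ - ψ1 x τ * ψ2 y τ) t
      = -Complex.I * ((x : ℂ) - y) * (ψ1 x t * ψ1 y t) := by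
    rw [deriv_fun_sub ((hd2 x t).fun_mul (hd1 y t)) ((hd1 x t).fun_mul (hd2 y t)),
      deriv_fun_mul (hd2 x t) (hd1 y t), deriv_fun_mul (hd1 x t) (hd2 y t),
      heq1, heq1, heq2, heq2]
    ring
  have hdnum : DifferentiableAt ℝ
      (fun τ => ψ2 x τ * ψ1 y τ - ψ1 x τ * ψ2 y τ) t :=
    ((hd2 x t).mul (hd1 y t)).sub ((hd1 x t).mul (hd2 y t))
  rw [deriv_div_const, hnum]
  have hπ : (π : ℂ) ≠ 0 := Complex.ofReal_ne_zero.mpr Real.pi_ne_zero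
  have hxysub : (x : ℂ) - y ≠ 0 := sub_ne_zero.mpr (by exact_mod_cast hxy)
  field_simp
end

section
/- Let α ∈ ℝ and define h(z) := ((√z - 1)/(√z + 1))^α for z ∈ ℂ \ (-∞, 1], where √z and the power w^α = exp(α Log w) use principal branches. Then: (i) for x ∈ (0,1), the boundary values satisfy h_+(x) = h_-(x) e^{2πiα}; (ii) for x ∈ (-∞, 0), the boundary values satisfy h_+(x) · h_-(x) = 1. -/
open Real Complex Filter Topology

/-- Imaginary part of the Möbius map `(u-1)/(u+1)`. -/
lemma szego_mob_im (u : ℂ) : ((u - 1) / (u + 1)).im = 2 * u.im / Complex.normSq (u + 1) := by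
  rw [Complex.div_im, div_sub_div_same]
  congr 1
  simp [Complex.sub_im, Complex.sub_re, Complex.add_im, Complex.add_re]
  ring

/-- Sign of imaginary part of the principal square root, upper case. -/
lemma szego_im_sqrt_pos {z : ℂ} (hz : 0 < z.im) : 0 < (z ^ ((1 : ℂ)/2)).im := by
  have hz0 : z ≠ 0 := by intro h; rw [h] at hz; simp at hz
  rw [Complex.cpow_def_of_ne_zero hz0, Complex.exp_im]
  have him : (Complex.log z * ((1:ℂ)/2)).im = z.arg / 2 := by
    simp [Complex.mul_im, Complex.log_im, Complex.log_re]
    ring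
  rw [him]
  have h1 : 0 < z.arg := by
    rcases lt_or_eq_of_le (Complex.arg_nonneg_iff.2 hz.le) with h | h
    · exact h
    · exfalso
      have := Complex.arg_eq_zero_iff.1 h.symm
      exact hz.ne' this.2
  have h2 : z.arg ≤ π := Complex.arg_le_pi z
  have : 0 < Real.sin (z.arg / 2) :=
    Real.sin_pos_of_pos_of_lt_pi (by linarith) (by linarith [Real.pi_pos])
  positivity

/-- Sign of imaginary part of the principal square root, lower case. -/
lemma szego_im_sqrt_neg {z : ℂ} (hz : z.im < 0) : (z ^ ((1 : ℂ)/2)).im < 0 := by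
  have hz0 : z ≠ 0 := by intro h; rw [h] at hz; simp at hz
  rw [Complex.cpow_def_of_ne_zero hz0, Complex.exp_im]
  have him : (Complex.log z * ((1:ℂ)/2)).im = z.arg / 2 := by
    simp [Complex.mul_im, Complex.log_im, Complex.log_re]
    ring
  rw [him]
  have h1 : z.arg < 0 := Complex.arg_neg_iff.2 hz
  have h2 : -π < z.arg := Complex.neg_pi_lt_arg z
  have : Real.sin (z.arg / 2) < 0 :=
    Real.sin_neg_of_neg_of_neg_pi_lt (by linarith) (by linarith [Real.pi_pos])
  have he := Real.exp_pos (Complex.log z * ((1:ℂ)/2)).re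
  nlinarith

/-- Boundary value of `w ^ a` on the negative axis from above. -/
lemma szego_cpow_upper {l : Filter ℝ} {f : ℝ → ℂ} {w : ℂ} (hre : w.re < 0) (him : w.im = 0)
    (hf : Filter.Tendsto f l (𝓝 w)) (h2 : ∀ᶠ t in l, 0 < (f t).im) (a : ℂ) :
    Filter.Tendsto (fun t => f t ^ a) l
      (𝓝 (Complex.exp ((Real.log (‖w‖) + π * Complex.I) * a))) := by
  have h3 : Filter.Tendsto f l (𝓝[{z : ℂ | 0 ≤ z.im}] w) :=
    tendsto_nhdsWithin_iff.2 ⟨hf, h2.mono fun t ht => le_of_lt ht⟩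
  have h4 := ((Complex.tendsto_log_nhdsWithin_im_nonneg_of_re_neg_of_im_zero hre him).comp
    h3).mul_const a
  have h5 := (Complex.continuous_exp.tendsto _).comp h4
  refine h5.congr' ?_
  filter_upwards [h2] with t ht
  rw [Function.comp_apply, Function.comp_apply, ← Complex.cpow_def_of_ne_zero]
  intro h0; rw [h0] at ht; simp at ht

/-- Boundary value of `w ^ a` on the negative axis from below. -/
lemma szego_cpow_lower {l : Filter ℝ} {f : ℝ → ℂ} {w : ℂ} (hre : w.re < 0) (him : w.im = 0)
    (hf : Filter.Tendsto f l (𝓝 w)) (h2 : ∀ᶠ t in l, (f t).im < 0) (a : ℂ) :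
    Filter.Tendsto (fun t => f t ^ a) l
      (𝓝 (Complex.exp ((Real.log (‖w‖) - π * Complex.I) * a))) := by
  have h3 : Filter.Tendsto f l (𝓝[{z : ℂ | z.im < 0}] w) :=
    tendsto_nhdsWithin_iff.2 ⟨hf, h2⟩
  have h4 := ((Complex.tendsto_log_nhdsWithin_im_neg_of_re_neg_of_im_zero hre him).comp
    h3).mul_const a
  have h5 := (Complex.continuous_exp.tendsto _).comp h4
  refine h5.congr' ?_
  filter_upwards [h2] with t ht
  rw [Function.comp_apply, Function.comp_apply, ← Complex.cpow_def_of_ne_zero]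
  intro h0; rw [h0] at ht; simp at ht


lemma szego_base (x : ℝ) :
    Filter.Tendsto (fun ε : ℝ => (x : ℂ) + ε * Complex.I) (nhdsWithin 0 (Set.Ioi 0))
      (𝓝 (x : ℂ)) := by
  have h : Continuous fun ε : ℝ => (x : ℂ) + (ε : ℂ) * Complex.I := by continuity
  simpa using (h.tendsto 0).mono_left nhdsWithin_le_nhds

lemma szego_base' (x : ℝ) :
    Filter.Tendsto (fun ε : ℝ => (x : ℂ) - ε * Complex.I) (nhdsWithin 0 (Set.Ioi 0))
      (𝓝 (x : ℂ)) := by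
  have h : Continuous fun ε : ℝ => (x : ℂ) - (ε : ℂ) * Complex.I := by continuity
  simpa using (h.tendsto 0).mono_left nhdsWithin_le_nhds



theorem szego_case1 (α : ℝ) (h : ℂ → ℂ)
    (hdef : ∀ z, h z = ((z ^ ((1 : ℂ) / 2) - 1) / (z ^ ((1 : ℂ) / 2) + 1)) ^ (α : ℂ)) :
    (∀ x : ℝ, 0 < x → x < 1 →
      ∃ hp hm : ℂ,
        Filter.Tendsto (fun ε : ℝ => h ((x : ℂ) + ε * Complex.I))
          (nhdsWithin 0 (Set.Ioi 0)) (nhds hp) ∧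
        Filter.Tendsto (fun ε : ℝ => h ((x : ℂ) - ε * Complex.I))
          (nhdsWithin 0 (Set.Ioi 0)) (nhds hm) ∧
        hp = hm * Complex.exp (2 * π * Complex.I * α)) := by
  intro x hx hx1
  set s := Real.sqrt x with hs
  have hs0 : 0 < s := Real.sqrt_pos.2 hx
  have hs1 : s < 1 := by
    calc s < Real.sqrt 1 := Real.sqrt_lt_sqrt hx.le hx1
    _ = 1 := Real.sqrt_one
  set w₀ : ℂ := ((s:ℂ) - 1) / ((s:ℂ) + 1) with hw₀
  have hwr : w₀ = (((s - 1)/(s + 1) : ℝ) : ℂ) := by push_cast; ring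
  have hsum : (0:ℝ) < s + 1 := by linarith
  have hre : w₀.re < 0 := by
    rw [hwr, Complex.ofReal_re]
    exact div_neg_of_neg_of_pos (by linarith) hsum
  have him : w₀.im = 0 := by rw [hwr, Complex.ofReal_im]
  have hxsq : (x:ℂ) ^ ((1:ℂ)/2) = (s:ℂ) := by
    have h12 : ((1:ℂ)/2) = (((1/2 : ℝ)):ℂ) := by norm_num
    rw [h12, ← Complex.ofReal_cpow hx.le, hs, Real.sqrt_eq_rpow]
  have hslit : (x:ℂ) ∈ Complex.slitPlane := by
    rw [Complex.mem_slitPlane_iff]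
    left; simpa using hx
  have hden : (s:ℂ) + 1 ≠ 0 := by
    intro hc
    have := congrArg Complex.re hc
    simp at this; linarith
  -- upper
  have up : Filter.Tendsto (fun ε : ℝ => ((x:ℂ) + ε * Complex.I) ^ ((1:ℂ)/2))
      (nhdsWithin 0 (Set.Ioi 0)) (𝓝 (s:ℂ)) := by
    rw [← hxsq]
    exact (szego_base x).cpow tendsto_const_nhds hslit
  have fp : Filter.Tendsto
      (fun ε : ℝ => (((x:ℂ) + ε * Complex.I) ^ ((1:ℂ)/2) - 1) /
        (((x:ℂ) + ε * Complex.I) ^ ((1:ℂ)/2) + 1))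
      (nhdsWithin 0 (Set.Ioi 0)) (𝓝 w₀) :=
    (up.sub tendsto_const_nhds).div (up.add tendsto_const_nhds) hden
  have hev : ∀ᶠ ε : ℝ in nhdsWithin 0 (Set.Ioi 0),
      0 < ((((x:ℂ) + ε * Complex.I) ^ ((1:ℂ)/2) - 1) /
        (((x:ℂ) + ε * Complex.I) ^ ((1:ℂ)/2) + 1)).im := by
    filter_upwards [self_mem_nhdsWithin] with ε hε
    set u := ((x:ℂ) + ε * Complex.I) ^ ((1:ℂ)/2) with hu
    have hui : 0 < u.im := szego_im_sqrt_pos (by simpa using hε)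
    rw [szego_mob_im]
    have hne : u + 1 ≠ 0 := by
      intro hc
      have := congrArg Complex.im hc
      simp at this; linarith
    exact div_pos (by linarith) (Complex.normSq_pos.2 hne)
  -- lower
  have um : Filter.Tendsto (fun ε : ℝ => ((x:ℂ) - ε * Complex.I) ^ ((1:ℂ)/2))
      (nhdsWithin 0 (Set.Ioi 0)) (𝓝 (s:ℂ)) := by
    rw [← hxsq]
    exact (szego_base' x).cpow tendsto_const_nhds hslit
  have fm : Filter.Tendsto
      (fun ε : ℝ => (((x:ℂ) - ε * Complex.I) ^ ((1:ℂ)/2) - 1) /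
        (((x:ℂ) - ε * Complex.I) ^ ((1:ℂ)/2) + 1))
      (nhdsWithin 0 (Set.Ioi 0)) (𝓝 w₀) :=
    (um.sub tendsto_const_nhds).div (um.add tendsto_const_nhds) hden
  have hev' : ∀ᶠ ε : ℝ in nhdsWithin 0 (Set.Ioi 0),
      ((((x:ℂ) - ε * Complex.I) ^ ((1:ℂ)/2) - 1) /
        (((x:ℂ) - ε * Complex.I) ^ ((1:ℂ)/2) + 1)).im < 0 := by
    filter_upwards [self_mem_nhdsWithin] with ε hε
    set u := ((x:ℂ) - ε * Complex.I) ^ ((1:ℂ)/2) with hu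
    have hεpos : (0:ℝ) < ε := hε
    have hui : u.im < 0 := szego_im_sqrt_neg (by simp; linarith)
    rw [szego_mob_im]
    have hne : u + 1 ≠ 0 := by
      intro hc
      have := congrArg Complex.im hc
      simp at this; linarith
    exact div_neg_of_neg_of_pos (by linarith) (Complex.normSq_pos.2 hne)
  refine ⟨Complex.exp ((Real.log (‖w₀‖) + π * Complex.I) * α),
    Complex.exp ((Real.log (‖w₀‖) - π * Complex.I) * α), ?_, ?_, ?_⟩
  · simpa only [hdef] using szego_cpow_upper hre him fp hev (α:ℂ)
  · simpa only [hdef] using szego_cpow_lower hre him fm hev' (α:ℂ)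
  · rw [← Complex.exp_add]
    congr 1
    ring

theorem szego_case2 (α : ℝ) (h : ℂ → ℂ)
    (hdef : ∀ z, h z = ((z ^ ((1 : ℂ) / 2) - 1) / (z ^ ((1 : ℂ) / 2) + 1)) ^ (α : ℂ)) :
    (∀ x : ℝ, x < 0 →
      ∃ hp hm : ℂ,
        Filter.Tendsto (fun ε : ℝ => h ((x : ℂ) + ε * Complex.I))
          (nhdsWithin 0 (Set.Ioi 0)) (nhds hp) ∧
        Filter.Tendsto (fun ε : ℝ => h ((x : ℂ) - ε * Complex.I))
          (nhdsWithin 0 (Set.Ioi 0)) (nhds hm) ∧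
        hp * hm = 1) := by
  intro x hx
  set t := Real.sqrt (-x) with ht
  have ht0 : 0 < t := Real.sqrt_pos.2 (by linarith)
  have habs : ‖(x:ℂ)‖ = -x := by
    rw [Complex.norm_real, Real.norm_eq_abs, abs_of_neg hx]
  have hxre : (x:ℂ).re < 0 := by simpa using hx
  have hxim : (x:ℂ).im = 0 := by simp
  have hexp : Real.exp (Real.log (-x) / 2) = t := by
    rw [ht, Real.sqrt_eq_rpow, Real.rpow_def_of_pos (by linarith : (0:ℝ) < -x)]
    ring_nf
  -- upper square root limit
  have upl : Complex.exp ((Real.log (‖(x:ℂ)‖) + π * Complex.I) * ((1:ℂ)/2))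
      = (t:ℂ) * Complex.I := by
    rw [habs]
    have he : ((Real.log (-x) : ℂ) + π * Complex.I) * ((1:ℂ)/2)
        = ((Real.log (-x) / 2 : ℝ) : ℂ) + ((π/2 : ℝ) : ℂ) * Complex.I := by
      push_cast; ring
    rw [he, Complex.exp_add, Complex.exp_mul_I, ← Complex.ofReal_cos, ← Complex.ofReal_sin,
      Real.cos_pi_div_two, Real.sin_pi_div_two, ← Complex.ofReal_exp, hexp]
    simp
  have uml : Complex.exp ((Real.log (‖(x:ℂ)‖) - π * Complex.I) * ((1:ℂ)/2))
      = -((t:ℂ) * Complex.I) := by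
    rw [habs]
    have he : ((Real.log (-x) : ℂ) - π * Complex.I) * ((1:ℂ)/2)
        = ((Real.log (-x) / 2 : ℝ) : ℂ) + ((-(π/2) : ℝ) : ℂ) * Complex.I := by
      push_cast; ring
    rw [he, Complex.exp_add, Complex.exp_mul_I, ← Complex.ofReal_cos, ← Complex.ofReal_sin,
      Real.cos_neg, Real.sin_neg, Real.cos_pi_div_two, Real.sin_pi_div_two,
      ← Complex.ofReal_exp, hexp]
    simp
  have hevb : ∀ᶠ ε : ℝ in nhdsWithin 0 (Set.Ioi 0), 0 < ((x:ℂ) + ε * Complex.I).im := by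
    filter_upwards [self_mem_nhdsWithin] with ε hε
    simpa using hε
  have hevb' : ∀ᶠ ε : ℝ in nhdsWithin 0 (Set.Ioi 0), ((x:ℂ) - ε * Complex.I).im < 0 := by
    filter_upwards [self_mem_nhdsWithin] with ε hε
    have : (0:ℝ) < ε := hε
    simp; linarith
  have up : Filter.Tendsto (fun ε : ℝ => ((x:ℂ) + ε * Complex.I) ^ ((1:ℂ)/2))
      (nhdsWithin 0 (Set.Ioi 0)) (𝓝 ((t:ℂ) * Complex.I)) := by
    rw [← upl]
    exact szego_cpow_upper hxre hxim (szego_base x) hevb ((1:ℂ)/2)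
  have um : Filter.Tendsto (fun ε : ℝ => ((x:ℂ) - ε * Complex.I) ^ ((1:ℂ)/2))
      (nhdsWithin 0 (Set.Ioi 0)) (𝓝 (-((t:ℂ) * Complex.I))) := by
    rw [← uml]
    exact szego_cpow_lower hxre hxim (szego_base' x) hevb' ((1:ℂ)/2)
  set wp : ℂ := ((t:ℂ) * Complex.I - 1) / ((t:ℂ) * Complex.I + 1) with hwp
  set wm : ℂ := (-((t:ℂ) * Complex.I) - 1) / (-((t:ℂ) * Complex.I) + 1) with hwm
  have hd1 : (t:ℂ) * Complex.I + 1 ≠ 0 := by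
    intro hc; have := congrArg Complex.re hc; simp at this
  have hd2 : -((t:ℂ) * Complex.I) + 1 ≠ 0 := by
    intro hc; have := congrArg Complex.re hc; simp at this
  have hpim : 0 < wp.im := by
    rw [hwp, szego_mob_im]
    refine div_pos ?_ (Complex.normSq_pos.2 hd1)
    simp; linarith
  have hmim : wm.im < 0 := by
    rw [hwm, szego_mob_im]
    refine div_neg_of_neg_of_pos ?_ (Complex.normSq_pos.2 hd2)
    simp; linarith
  have hpslit : wp ∈ Complex.slitPlane := Complex.mem_slitPlane_iff.2 (Or.inr hpim.ne')
  have hmslit : wm ∈ Complex.slitPlane := Complex.mem_slitPlane_iff.2 (Or.inr hmim.ne)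
  have fp : Filter.Tendsto
      (fun ε : ℝ => ((((x:ℂ) + ε * Complex.I) ^ ((1:ℂ)/2) - 1) /
        (((x:ℂ) + ε * Complex.I) ^ ((1:ℂ)/2) + 1)) ^ (α:ℂ))
      (nhdsWithin 0 (Set.Ioi 0)) (𝓝 (wp ^ (α:ℂ))) :=
    ((up.sub tendsto_const_nhds).div (up.add tendsto_const_nhds) hd1).cpow
      tendsto_const_nhds hpslit
  have fm : Filter.Tendsto
      (fun ε : ℝ => ((((x:ℂ) - ε * Complex.I) ^ ((1:ℂ)/2) - 1) /
        (((x:ℂ) - ε * Complex.I) ^ ((1:ℂ)/2) + 1)) ^ (α:ℂ))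
      (nhdsWithin 0 (Set.Ioi 0)) (𝓝 (wm ^ (α:ℂ))) :=
    ((um.sub tendsto_const_nhds).div (um.add tendsto_const_nhds) hd2).cpow
      tendsto_const_nhds hmslit
  have hmul : wp * wm = 1 := by
    rw [hwp, hwm, div_mul_div_comm, div_eq_one_iff_eq (mul_ne_zero hd1 hd2)]
    ring_nf
  have hinv : wm = wp⁻¹ := (inv_eq_of_mul_eq_one_right hmul).symm
  have harg : wp.arg ≠ π := by
    intro hc
    have := (Complex.arg_eq_pi_iff.1 hc).2
    linarith
  have hne : wp ^ (α:ℂ) ≠ 0 := by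
    rw [Ne, Complex.cpow_eq_zero_iff]
    rintro ⟨hc, -⟩
    rw [hc] at hpim; simp at hpim
  refine ⟨wp ^ (α:ℂ), wm ^ (α:ℂ), ?_, ?_, ?_⟩
  · simpa only [hdef] using fp
  · simpa only [hdef] using fm
  · rw [hinv, Complex.inv_cpow _ _ harg, mul_inv_cancel₀ hne]

/-- Jump relations of the Szegő-type function `h(z) = ((√z-1)/(√z+1))^α`: on `(0,1)` the
boundary values satisfy `h₊ = h₋ e^{2πiα}`, and on `(-∞,0)` they satisfy `h₊ h₋ = 1`. -/
theorem szego_function_jumps (α : ℝ) (h : ℂ → ℂ)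
    (hdef : ∀ z, h z = ((z ^ ((1 : ℂ) / 2) - 1) / (z ^ ((1 : ℂ) / 2) + 1)) ^ (α : ℂ)) :
    (∀ x : ℝ, 0 < x → x < 1 →
      ∃ hp hm : ℂ,
        Filter.Tendsto (fun ε : ℝ => h ((x : ℂ) + ε * Complex.I))
          (nhdsWithin 0 (Set.Ioi 0)) (nhds hp) ∧
        Filter.Tendsto (fun ε : ℝ => h ((x : ℂ) - ε * Complex.I))
          (nhdsWithin 0 (Set.Ioi 0)) (nhds hm) ∧
        hp = hm * Complex.exp (2 * π * Complex.I * α)) ∧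
    (∀ x : ℝ, x < 0 →
      ∃ hp hm : ℂ,
        Filter.Tendsto (fun ε : ℝ => h ((x : ℂ) + ε * Complex.I))
          (nhdsWithin 0 (Set.Ioi 0)) (nhds hp) ∧
        Filter.Tendsto (fun ε : ℝ => h ((x : ℂ) - ε * Complex.I))
          (nhdsWithin 0 (Set.Ioi 0)) (nhds hm) ∧
        hp * hm = 1) := ⟨szego_case1 α h hdef, szego_case2 α h hdef⟩
end

section
/- Let α ∈ ℝ. Then as ξ → +∞ (ξ real), ((√ξ - 1)/(√ξ + 1))^α = 1 - 2α ξ^{-1/2} + 2α² ξ^{-1} - (2/3)(α + 2α³) ξ^{-3/2} + O(ξ^{-2}). -/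
open Real Filter Asymptotics

set_option maxHeartbeats 1000000

lemma log_expand_aux {t : ℝ} (h0 : 0 < t) (h1 : t ≤ 1/2) :
    |Real.log ((1-t)/(1+t)) + 2*t + (2/3)*t^3| ≤ 4*t^4 := by
  have ht1 : |t| < 1 := by rw [abs_of_pos h0]; linarith
  have ht1' : |(-t)| < 1 := by rw [abs_neg]; exact ht1
  have hA := Real.abs_log_sub_add_sum_range_le ht1 3
  have hB := Real.abs_log_sub_add_sum_range_le ht1' 3
  simp only [Finset.sum_range_succ, Finset.sum_range_zero] at hA hB
  rw [abs_of_pos h0] at hA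
  rw [abs_neg, abs_of_pos h0] at hB
  have hden : t^4 / (1 - t) ≤ 2*t^4 := by
    rw [div_le_iff₀ (by linarith)]
    nlinarith [pow_pos h0 4]
  have hlog : Real.log ((1-t)/(1+t)) = Real.log (1-t) - Real.log (1+t) := by
    rw [Real.log_div (by linarith) (by linarith)]
  rw [hlog]
  have h2 : (1 : ℝ) - -t = 1 + t := by ring
  rw [h2] at hB
  replace hA := hA.trans hden
  replace hB := hB.trans hden
  rw [abs_le] at hA hB ⊢
  norm_num at hA hB
  constructor <;> nlinarith [hA.1, hA.2, hB.1, hB.2]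

lemma key_bound (α : ℝ) {t : ℝ} (h0 : 0 < t) (h1 : t ≤ 1/2)
    (h2 : t ≤ 1/(3*(|α|+1))) :
    |((1-t)/(1+t))^α - (1 - 2*α*t + 2*α^2*t^2 - (2/3)*(α+2*α^3)*t^3)|
      ≤ (100*(1+|α|)^4) * t^4 := by
  obtain ⟨a, ha⟩ : ∃ a, a = |α| := ⟨_, rfl⟩
  rw [← ha] at h2 ⊢
  have ha0 : 0 ≤ a := ha ▸ abs_nonneg α
  have haα : -a ≤ α ∧ α ≤ a := ha ▸ abs_le.mp le_rfl
  have hbase : (0:ℝ) < (1-t)/(1+t) := div_pos (by linarith) (by linarith)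
  obtain ⟨L, hL⟩ : ∃ L, L = Real.log ((1-t)/(1+t)) := ⟨_, rfl⟩
  have hLb : |L + 2*t + (2/3)*t^3| ≤ 4*t^4 := hL ▸ log_expand_aux h0 h1
  have ht2 : t^2 ≤ 1/4 := by nlinarith
  have ht3 : t^3 ≤ t/4 := by nlinarith [mul_le_mul_of_nonneg_left ht2 h0.le]
  have ht4' : t^4 ≤ t/8 := by nlinarith [mul_le_mul_of_nonneg_left ht3 h0.le]
  have hLabs : |L| ≤ 3*t := by
    have h23 : |2*t + (2/3)*t^3| = 2*t + (2/3)*t^3 := by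
      rw [abs_of_pos]; positivity
    have htri : |L| ≤ |L + 2*t + (2/3)*t^3| + |2*t + (2/3)*t^3| := by
      calc |L| = |(L + 2*t + (2/3)*t^3) - (2*t + (2/3)*t^3)| := by ring_nf
        _ ≤ _ := abs_sub _ _
    rw [h23] at htri
    nlinarith [pow_pos h0 3]
  obtain ⟨u, hu⟩ : ∃ u, u = L * α := ⟨_, rfl⟩
  rw [le_div_iff₀ (by positivity)] at h2
  have hta : t * a ≤ 1/3 := by nlinarith
  have huabs : |u| ≤ 3*a*t := by
    rw [hu, abs_mul, ← ha]
    calc |L| * a ≤ (3*t) * a := mul_le_mul_of_nonneg_right hLabs ha0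
      _ = 3*a*t := by ring
  have hu1 : |u| ≤ 1 := huabs.trans (by nlinarith)
  -- exponential bound
  have hrw : ((1-t)/(1+t)) ^ α = Real.exp u := by
    rw [Real.rpow_def_of_pos hbase, ← hL, ← hu]
  have hexp := Real.exp_bound hu1 (n := 4) (by norm_num)
  simp only [Finset.sum_range_succ, Finset.sum_range_zero] at hexp
  norm_num [Nat.factorial] at hexp
  obtain ⟨v, hv⟩ : ∃ v, v = -(2*α)*t - (2*α/3)*t^3 := ⟨_, rfl⟩
  have hw : |u - v| ≤ 4*a*t^4 := by
    have heq : u - v = (L + 2*t + (2/3)*t^3) * α := by rw [hu, hv]; ring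
    rw [heq, abs_mul, ← ha]
    calc |L + 2*t + (2/3)*t^3| * a ≤ (4*t^4) * a :=
        mul_le_mul_of_nonneg_right hLb ha0
      _ = 4*a*t^4 := by ring
  have hvabs : |v| ≤ 3*a*t := by
    rw [hv, abs_le]
    have e1 := mul_le_mul_of_nonneg_right haα.2 h0.le
    have e2 := mul_le_mul_of_nonneg_right haα.1 h0.le
    have e3 := mul_le_mul_of_nonneg_right haα.2 (le_of_lt (pow_pos h0 3))
    have e4 := mul_le_mul_of_nonneg_right haα.1 (le_of_lt (pow_pos h0 3))
    have e5 := mul_le_mul_of_nonneg_left ht3 ha0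
    constructor <;> nlinarith [pow_pos h0 3]
  have hv1 : |v| ≤ 1 := hvabs.trans (by nlinarith)
  -- S(u) - S(v)
  obtain ⟨hu1a, hu1b⟩ := abs_le.mp hu1
  obtain ⟨hv1a, hv1b⟩ := abs_le.mp hv1
  have hSuv : |(1 + u + u^2/2 + u^3/6) - (1 + v + v^2/2 + v^3/6)| ≤ 12*a*t^4 := by
    have hfac : (1 + u + u^2/2 + u^3/6) - (1 + v + v^2/2 + v^3/6)
        = (u - v) * (1 + (u+v)/2 + (u^2 + u*v + v^2)/6) := by ring
    rw [hfac, abs_mul]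
    have hf3 : |1 + (u+v)/2 + (u^2 + u*v + v^2)/6| ≤ 3 := by
      rw [abs_le]; constructor <;> nlinarith [sq_nonneg (u+v), sq_nonneg (u-v)]
    calc |u - v| * |1 + (u+v)/2 + (u^2 + u*v + v^2)/6|
        ≤ (4*a*t^4) * 3 :=
          mul_le_mul hw hf3 (abs_nonneg _) (by positivity)
      _ = 12*a*t^4 := by ring
  -- S(v) - P(t)
  have hSvP : |(1 + v + v^2/2 + v^3/6)
      - (1 - 2*α*t + 2*α^2*t^2 - (2/3)*(α+2*α^3)*t^3)| ≤ (2*a^2 + 2*a^3)*t^4 := by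
    have hfac : (1 + v + v^2/2 + v^3/6)
        - (1 - 2*α*t + 2*α^2*t^2 - (2/3)*(α+2*α^3)*t^3)
        = t^4 * ((4*α^2/3) - (4*α^3/3)*t + (2*α^2/9)*t^2 - (4*α^3/9)*t^3
            - (4*α^3/81)*t^5) := by rw [hv]; ring
    rw [hfac, abs_mul, abs_of_pos (pow_pos h0 4)]
    have hα2 : α^2 ≤ a^2 := by nlinarith [haα.1, haα.2]
    have hα3 : -(a^3) ≤ α^3 ∧ α^3 ≤ a^3 := by
      constructor <;> nlinarith [haα.1, haα.2, sq_nonneg (α + a), sq_nonneg (α - a)]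
    have habs2 : |α^2| = a^2 := by rw [abs_pow, ← ha]
    have habs3 : |α^3| = a^3 := by rw [abs_pow, ← ha]
    have ht1' : t ≤ 1 := by linarith
    have hp2 : t^2 ≤ 1 := pow_le_one₀ h0.le ht1'
    have hp3 : t^3 ≤ 1 := pow_le_one₀ h0.le ht1'
    have hp5 : t^5 ≤ 1 := pow_le_one₀ h0.le ht1'
    have ha3 : (0:ℝ) ≤ a^3 := pow_nonneg ha0 3
    have ha2 : (0:ℝ) ≤ a^2 := pow_nonneg ha0 2
    have e1 : |4*α^2/3| = 4*a^2/3 := by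
      rw [show (4*α^2/3 : ℝ) = (4/3)*α^2 by ring, abs_mul, habs2,
        abs_of_pos (by norm_num : (0:ℝ) < 4/3)]
      ring
    have e2 : |(4*α^3/3)*t| ≤ 4*a^3/3 := by
      rw [abs_mul, show (4*α^3/3 : ℝ) = (4/3)*α^3 by ring, abs_mul, habs3,
        abs_of_pos (by norm_num : (0:ℝ) < 4/3), abs_of_pos h0]
      linarith [mul_le_mul_of_nonneg_left ht1' ha3]
    have e3 : |(2*α^2/9)*t^2| ≤ 2*a^2/9 := by
      rw [abs_mul, show (2*α^2/9 : ℝ) = (2/9)*α^2 by ring, abs_mul, habs2,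
        abs_of_pos (by norm_num : (0:ℝ) < 2/9), abs_of_pos (pow_pos h0 2)]
      linarith [mul_le_mul_of_nonneg_left hp2 ha2]
    have e4 : |(4*α^3/9)*t^3| ≤ 4*a^3/9 := by
      rw [abs_mul, show (4*α^3/9 : ℝ) = (4/9)*α^3 by ring, abs_mul, habs3,
        abs_of_pos (by norm_num : (0:ℝ) < 4/9), abs_of_pos (pow_pos h0 3)]
      linarith [mul_le_mul_of_nonneg_left hp3 ha3]
    have e5 : |(4*α^3/81)*t^5| ≤ 4*a^3/81 := by
      rw [abs_mul, show (4*α^3/81 : ℝ) = (4/81)*α^3 by ring, abs_mul, habs3,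
        abs_of_pos (by norm_num : (0:ℝ) < 4/81), abs_of_pos (pow_pos h0 5)]
      linarith [mul_le_mul_of_nonneg_left hp5 ha3]
    have hR : |(4*α^2/3) - (4*α^3/3)*t + (2*α^2/9)*t^2 - (4*α^3/9)*t^3
        - (4*α^3/81)*t^5| ≤ 2*a^2 + 2*a^3 := by
      have tri1 := abs_sub ((4*α^2/3) - (4*α^3/3)*t + (2*α^2/9)*t^2 - (4*α^3/9)*t^3)
        ((4*α^3/81)*t^5)
      have tri2 := abs_sub ((4*α^2/3) - (4*α^3/3)*t + (2*α^2/9)*t^2) ((4*α^3/9)*t^3)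
      have tri3 := abs_add_le ((4*α^2/3) - (4*α^3/3)*t) ((2*α^2/9)*t^2)
      have tri4 := abs_sub (4*α^2/3) ((4*α^3/3)*t)
      linarith
    calc t^4 * |(4*α^2/3) - (4*α^3/3)*t + (2*α^2/9)*t^2 - (4*α^3/9)*t^3
          - (4*α^3/81)*t^5| ≤ t^4 * (2*a^2 + 2*a^3) :=
        mul_le_mul_of_nonneg_left hR (by positivity)
      _ = (2*a^2 + 2*a^3)*t^4 := by ring
  -- exp remainder in terms of t
  have hexpR : |Real.exp u - (1 + u + u^2/2 + u^3/6)| ≤ 81*a^4*t^4 := by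
    have h4 : |u|^4 ≤ (3*a*t)^4 := pow_le_pow_left₀ (abs_nonneg u) huabs 4
    calc |Real.exp u - (1 + u + u^2/2 + u^3/6)| ≤ |u|^4 * (5/96) := hexp
      _ ≤ (3*a*t)^4 * 1 :=
          mul_le_mul h4 (by norm_num) (by norm_num) (by positivity)
      _ = 81*a^4*t^4 := by ring
  -- assemble
  rw [hrw]
  have hC : 81*a^4 + 12*a + (2*a^2 + 2*a^3) ≤ 100*(1+a)^4 := by
    nlinarith [pow_nonneg ha0 2, pow_nonneg ha0 3, pow_nonneg ha0 4, ha0]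
  calc |Real.exp u - (1 - 2*α*t + 2*α^2*t^2 - (2/3)*(α+2*α^3)*t^3)|
      ≤ |Real.exp u - (1 + u + u^2/2 + u^3/6)|
        + |(1 + u + u^2/2 + u^3/6) - (1 + v + v^2/2 + v^3/6)|
        + |(1 + v + v^2/2 + v^3/6)
            - (1 - 2*α*t + 2*α^2*t^2 - (2/3)*(α+2*α^3)*t^3)| := by
        have t1 := abs_sub_le (Real.exp u) (1 + u + u^2/2 + u^3/6)
          (1 - 2*α*t + 2*α^2*t^2 - (2/3)*(α+2*α^3)*t^3)
        have t2 := abs_sub_le (1 + u + u^2/2 + u^3/6) (1 + v + v^2/2 + v^3/6)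
          (1 - 2*α*t + 2*α^2*t^2 - (2/3)*(α+2*α^3)*t^3)
        linarith
    _ ≤ 81*a^4*t^4 + 12*a*t^4 + (2*a^2 + 2*a^3)*t^4 := by
        gcongr
    _ = (81*a^4 + 12*a + (2*a^2 + 2*a^3)) * t^4 := by ring
    _ ≤ (100*(1+a)^4) * t^4 :=
        mul_le_mul_of_nonneg_right hC (by positivity)

/-- Large-`ξ` expansion of `((√ξ-1)/(√ξ+1))^α`:
`1 - 2α ξ^{-1/2} + 2α² ξ^{-1} - (2/3)(α + 2α³) ξ^{-3/2} + O(ξ^{-2})`. -/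
theorem szego_large_xi_expansion (α : ℝ) :
    (fun ξ : ℝ => ((Real.sqrt ξ - 1) / (Real.sqrt ξ + 1)) ^ α
        - (1 - 2 * α * ξ ^ (-(1 : ℝ) / 2) + 2 * α ^ 2 * ξ⁻¹
          - (2 / 3) * (α + 2 * α ^ 3) * ξ ^ (-(3 : ℝ) / 2)))
      =O[atTop] fun ξ : ℝ => ξ ^ (-(2 : ℝ)) := by
  rw [isBigO_iff]
  refine ⟨100*(1+|α|)^4, ?_⟩
  filter_upwards [eventually_ge_atTop (max 4 (9*(|α|+1)^2))] with ξ hξ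
  have h4 : (4:ℝ) ≤ ξ := le_trans (le_max_left _ _) hξ
  have h9 : 9*(|α|+1)^2 ≤ ξ := le_trans (le_max_right _ _) hξ
  have hξ0 : (0:ℝ) < ξ := by linarith
  set s := Real.sqrt ξ with hs
  have hs0 : 0 < s := Real.sqrt_pos.mpr hξ0
  have hs2 : 2 ≤ s := by
    have h := Real.sqrt_le_sqrt h4
    rwa [show (4:ℝ) = 2^2 by norm_num, Real.sqrt_sq (by norm_num : (0:ℝ) ≤ 2)] at h
  have hsα : 3*(|α|+1) ≤ s := by
    have h := Real.sqrt_le_sqrt h9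
    rwa [show 9*(|α|+1)^2 = (3*(|α|+1))^2 by ring,
      Real.sqrt_sq (by positivity)] at h
  set t := ξ ^ (-(1:ℝ)/2) with ht
  have ht0 : 0 < t := Real.rpow_pos_of_pos hξ0 _
  have hts : t = s⁻¹ := by
    rw [ht, hs, show (-(1:ℝ)/2) = -(1/2) by ring, Real.rpow_neg hξ0.le,
      ← Real.sqrt_eq_rpow]
  have hthalf : t ≤ 1/2 := by
    rw [hts]
    rw [inv_le_comm₀ hs0 (by norm_num)]
    linarith
  have htα : t ≤ 1/(3*(|α|+1)) := by
    rw [hts, one_div]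
    exact inv_anti₀ (by positivity) hsα
  have e2 : ξ⁻¹ = t^2 := by
    rw [ht, ← Real.rpow_natCast (ξ ^ (-(1:ℝ)/2)) 2, ← Real.rpow_mul hξ0.le,
      ← Real.rpow_neg_one ξ]
    norm_num
  have e3 : ξ ^ (-(3:ℝ)/2) = t^3 := by
    rw [ht, ← Real.rpow_natCast (ξ ^ (-(1:ℝ)/2)) 3, ← Real.rpow_mul hξ0.le]
    norm_num
  have e4 : ξ ^ (-(2:ℝ)) = t^4 := by
    rw [ht, ← Real.rpow_natCast (ξ ^ (-(1:ℝ)/2)) 4, ← Real.rpow_mul hξ0.le]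
    norm_num
  have hbase : (s - 1)/(s + 1) = (1 - t)/(1 + t) := by
    rw [hts, div_eq_div_iff (by linarith) (by positivity)]
    field_simp
  rw [Real.norm_eq_abs, Real.norm_eq_abs, hbase, e2, e3, e4,
    abs_of_pos (pow_pos ht0 4)]
  exact key_bound α ht0 hthalf htα
end
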